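/- Let 0 < k̲ < k̄ and let (pₙ)ₙ₌₀^∞ be real polynomials with deg pₙ = n for every n, such that the functions φₙ(k) = pₙ(k) e^k form an orthonormal system in L²(0,1), i.e. ∫₀¹ φₙ(k) φₘ(k) dk = 1 if n = m and 0 otherwise. Define ψₙ(k) = (k̄ − k̲)^{-1/2} φₙ((k − k̲)/(k̄ − k̲)) for k ∈ [k̲, k̄], and set aₘₙ = ∫_{k̲}^{k̄} ψₙ'(k) ψₘ(k) dk. Then aₘₙ = (k̄ − k̲)^{-1} if n = m and aₘₙ = 0 if n < m; consequently, for every integer N ≥ 1 the N×N matrix M_N = (aₘₙ)_{m,n=0}^{N-1} is upper triangular with det(M_N) = (k̄ − k̲)^{-N} ≠ 0, so M_N is invertible. (Lemma 3.1.) -/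

import Mathlib

open MeasureTheory Polynomial

/-!
Rescaling `[klow, khigh]` to `[0, 1]` turns `aₘₙ` into `(khigh - klow)⁻¹ ∫₀¹ φₙ' φₘ`, and
`φₙ' = (pₙ' + pₙ) eᵏ`. Since the `pᵢ` with `i < m` span the polynomials of degree `< m`,
orthogonality of `φₘ` to `φ₀, …, φₘ₋₁` makes `∫₀¹ q eᵏ φₘ` vanish whenever `deg q < m`.
As `deg pₙ' < n`, this gives `∫₀¹ φₙ' φₙ = ∫₀¹ φₙ φₙ = 1` and `∫₀¹ φₙ' φₘ = 0` for `n < m`: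
the matrix is upper triangular with constant diagonal `(khigh - klow)⁻¹`.
-/

namespace Polynomial.Sequence

theorem map_eq_zero_of_degree_lt {K M : Type*} [Field K] [AddCommGroup M] [Module K M]
    (S : Sequence K) (L : K[X] →ₗ[K] M) {m : ℕ} (hL : ∀ i < m, L (S i) = 0) {q : K[X]}
    (hq : q.degree < m) : L q = 0 := by
  have hspan : q ∈ Submodule.span K (S '' Set.Iio m) := by
    rw [S.span_degreeLT fun i _ => (leadingCoeff_ne_zero.mpr (S.ne_zero i)).isUnit]
    exact mem_degreeLT.mpr hq
  exact Submodule.span_le (p := LinearMap.ker L)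
    |>.mpr (by rintro _ ⟨i, hi, rfl⟩; exact hL i hi) hspan

end Polynomial.Sequence

noncomputable def Polynomial.intervalIntegralMulₗ (f : ℝ → ℝ) (a b : ℝ)
    (hf : IntervalIntegrable f volume a b) : ℝ[X] →ₗ[ℝ] ℝ where
  toFun q := ∫ x in a..b, q.eval x * f x
  map_add' q r := by
    simp only [eval_add, add_mul]
    exact intervalIntegral.integral_add (hf.continuousOn_mul q.continuousOn)
      (hf.continuousOn_mul r.continuousOn)
  map_smul' c q := by
    simp only [eval_smul, smul_eq_mul, mul_assoc, intervalIntegral.integral_const_mul,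
      RingHom.id_apply]

@[simp]
theorem Polynomial.intervalIntegralMulₗ_apply (f : ℝ → ℝ) (a b : ℝ)
    (hf : IntervalIntegrable f volume a b) (q : ℝ[X]) :
    intervalIntegralMulₗ f a b hf q = ∫ x in a..b, q.eval x * f x := rfl

theorem Polynomial.degree_derivative_add_self {R : Type*} [Semiring R] (q : R[X]) :
    (derivative q + q).degree = q.degree := by
  rcases eq_or_ne q 0 with rfl | hq
  · simp
  · exact degree_add_eq_right_of_degree_lt (degree_derivative_lt hq)

theorem Polynomial.hasDerivAt_eval_mul_exp (q : ℝ[X]) (x : ℝ) :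
    HasDerivAt (fun x => q.eval x * Real.exp x) ((derivative q + q).eval x * Real.exp x) x :=
  ((q.hasDerivAt x).mul (Real.hasDerivAt_exp x)).congr_deriv (by rw [eval_add]; ring)

theorem intervalIntegral.integral_comp_sub_div_sub {E : Type*} [NormedAddCommGroup E]
    [NormedSpace ℝ E] (g : ℝ → E) (a b : ℝ) :
    ∫ k in a..b, g ((k - a) / (b - a)) = (b - a) • ∫ x in (0 : ℝ)..1, g x := by
  rcases eq_or_ne (b - a) 0 with hab | hab
  · rw [hab, zero_smul, sub_eq_zero.mp hab, intervalIntegral.integral_same]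
  · simp_rw [sub_div]
    rw [intervalIntegral.integral_comp_div_sub g hab, sub_self, ← sub_div, div_self hab]

theorem integral_deriv_rescale_mul_rescale {a b : ℝ} (hab : a ≤ b) {f f' : ℝ → ℝ}
    (hf : ∀ x, HasDerivAt f (f' x) x) (g : ℝ → ℝ) :
    ∫ k in a..b, deriv (fun k => (√(b - a))⁻¹ * f ((k - a) / (b - a))) k
        * ((√(b - a))⁻¹ * g ((k - a) / (b - a)))
      = (b - a)⁻¹ * ∫ x in (0 : ℝ)..1, f' x * g x := by
  have hderiv : ∀ k, deriv (fun k => (√(b - a))⁻¹ * f ((k - a) / (b - a))) k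
      = (√(b - a))⁻¹ * (b - a)⁻¹ * f' ((k - a) / (b - a)) := fun k => by
    have hlin : HasDerivAt (fun k => (k - a) / (b - a)) (b - a)⁻¹ k := by
      simpa using ((hasDerivAt_id k).sub_const a).div_const (b - a)
    have h : HasDerivAt (fun k => (√(b - a))⁻¹ * f ((k - a) / (b - a)))
        ((√(b - a))⁻¹ * (f' ((k - a) / (b - a)) * (b - a)⁻¹)) k :=
      ((hf _).comp k hlin).const_mul _
    rw [h.deriv]
    ring
  have hsqrt : (√(b - a))⁻¹ * (√(b - a))⁻¹ = (b - a)⁻¹ := by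
    rw [← mul_inv, Real.mul_self_sqrt (sub_nonneg.mpr hab)]
  simp_rw [hderiv]
  calc ∫ k in a..b, (√(b - a))⁻¹ * (b - a)⁻¹ * f' ((k - a) / (b - a))
          * ((√(b - a))⁻¹ * g ((k - a) / (b - a)))
      = (b - a)⁻¹ * (b - a)⁻¹
          * ∫ k in a..b, f' ((k - a) / (b - a)) * g ((k - a) / (b - a)) := by
        rw [← hsqrt, ← intervalIntegral.integral_const_mul]
        congr 1 with k
        ring
    _ = (b - a)⁻¹ * ∫ x in (0 : ℝ)..1, f' x * g x := by
        rw [intervalIntegral.integral_comp_sub_div_sub (fun x => f' x * g x), smul_eq_mul]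
        rcases eq_or_ne (b - a) 0 with h | h
        · simp [h]
        · field_simp

theorem special_basis_matrix_invertible
    (klow khigh : ℝ) (hk : klow < khigh)
    (p : ℕ → Polynomial ℝ) (hdeg : ∀ n : ℕ, (p n).degree = n)
    (φ : ℕ → ℝ → ℝ) (hφ : ∀ n k, φ n k = (p n).eval k * Real.exp k)
    (horth : ∀ n m : ℕ,
      (∫ k in (0:ℝ)..1, φ n k * φ m k) = if n = m then 1 else 0)
    (ψ : ℕ → ℝ → ℝ)
    (hψ : ∀ n k, ψ n k =
      (Real.sqrt (khigh - klow))⁻¹ * φ n ((k - klow) / (khigh - klow)))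
    (a : ℕ → ℕ → ℝ)
    (ha : ∀ m n, a m n = ∫ k in klow..khigh, deriv (ψ n) k * ψ m k) :
    (∀ n : ℕ, a n n = (khigh - klow)⁻¹) ∧
    (∀ m n : ℕ, n < m → a m n = 0) ∧
    (∀ N : ℕ, 1 ≤ N →
      (Matrix.of fun m n : Fin N => a m n).det = ((khigh - klow)⁻¹) ^ N ∧
      ((khigh - klow)⁻¹) ^ N ≠ 0 ∧
      IsUnit (Matrix.of fun m n : Fin N => a m n)) := by
  obtain rfl : ψ = fun n k => (√(khigh - klow))⁻¹ * φ n ((k - klow) / (khigh - klow)) :=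
    funext₂ hψ
  have hφ_eq (n : ℕ) : φ n = fun x => (p n).eval x * Real.exp x := funext (hφ n)
  let S : Sequence ℝ := ⟨p, hdeg⟩
  have hφ_cont (m : ℕ) : Continuous (φ m) := hφ_eq m ▸ (p m).continuous.mul Real.continuous_exp
  let L (m : ℕ) : ℝ[X] →ₗ[ℝ] ℝ := intervalIntegralMulₗ (fun x => Real.exp x * φ m x) 0 1
    ((Real.continuous_exp.mul (hφ_cont m)).intervalIntegrable 0 1)
  have hL (i m : ℕ) : L m (p i) = if i = m then 1 else 0 := by
    rw [← horth, intervalIntegralMulₗ_apply]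
    congr 1 with x
    rw [hφ i x, mul_assoc]
  have hL_lt (m : ℕ) {q : ℝ[X]} (hq : q.degree < m) : L m q = 0 :=
    S.map_eq_zero_of_degree_lt (L m) (fun i hi => (hL i m).trans (if_neg hi.ne)) hq
  have hentry (m n : ℕ) : a m n = (khigh - klow)⁻¹ * L m (derivative (p n) + p n) := by
    rw [ha, integral_deriv_rescale_mul_rescale hk.le
      (fun x => hφ_eq n ▸ (p n).hasDerivAt_eval_mul_exp x)]
    simp only [L, intervalIntegralMulₗ_apply, mul_assoc]
  have hdiag (n : ℕ) : a n n = (khigh - klow)⁻¹ := by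
    rw [hentry, map_add, hL_lt n ((degree_derivative_lt (S.ne_zero n)).trans_eq (hdeg n)), hL,
      if_pos rfl, zero_add, mul_one]
  have hlower (m n : ℕ) (hnm : n < m) : a m n = 0 := by
    rw [hentry, hL_lt m (by rw [degree_derivative_add_self, hdeg]; exact_mod_cast hnm), mul_zero]
  refine ⟨hdiag, hlower, fun N _ => ?_⟩
  have hdet : (Matrix.of fun m n : Fin N => a m n).det = ((khigh - klow)⁻¹) ^ N := by
    rw [Matrix.det_of_isUpperTriangular (M := Matrix.of fun m n : Fin N => a m n)
      fun i j hij => hlower i j hij]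
    simp [hdiag]
  have hne : ((khigh - klow)⁻¹) ^ N ≠ 0 := pow_ne_zero _ (inv_ne_zero (sub_ne_zero.mpr hk.ne'))
  exact ⟨hdet, hne, (Matrix.isUnit_iff_isUnit_det _).mpr (hdet ▸ hne.isUnit)⟩
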